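/- Let A be a commutative domain of characteristic zero and ∂ a locally nilpotent derivation on A. Then ker ∂ is factorially closed in A: if a·b ∈ ker ∂ with a, b nonzero, then a ∈ ker ∂ and b ∈ ker ∂. -/

import Mathlib

/-!
Write `ν(x)` for the largest `m` with `∂^m x ≠ 0`. If `ν(a) = m` and `ν(b) = n`, the general
Leibniz rule expresses `∂^(m+n)(ab)` as a sum in which every term except
`C(m+n, m) ∂^m a ∂^n b` vanishes; in a domain of characteristic zero that term is nonzero.
So `∂^(m+n)(ab) ≠ 0`, and `∂(ab) = 0` forces `m + n = 0`.
-/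

/-- A derivation is locally nilpotent if every element is annihilated by some iterate. -/
def IsLND {R A : Type*} [CommRing R] [CommRing A] [Algebra R A]
    (D : Derivation R A A) : Prop :=
  ∀ a : A, ∃ n : ℕ, (⇑D)^[n] a = 0

open Finset

theorem Function.exists_iterate_ne_and_iterate_succ_eq {α : Type*} {f : α → α} {x y : α}
    (hx : x ≠ y) {N : ℕ} (hN : f^[N] x = y) : ∃ m, f^[m] x ≠ y ∧ f^[m + 1] x = y := by
  induction N with
  | zero => exact absurd hN hx
  | succ N ih => exact (em (f^[N] x = y)).elim ih fun h ↦ ⟨N, h, hN⟩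

namespace Derivation

variable {R A : Type*} [CommRing R] [CommRing A] [Algebra R A] (D : Derivation R A A)

theorem iterate_map_mul_eq_sum_antidiagonal (n : ℕ) (a b : A) :
    (⇑D)^[n] (a * b) =
      ∑ ij ∈ antidiagonal n, n.choose ij.1 • ((⇑D)^[ij.1] a * (⇑D)^[ij.2] b) := by
  induction n with
  | zero => simp
  | succ n ih =>
    rw [sum_antidiagonal_choose_succ_nsmul (M := A) (fun i j ↦ (⇑D)^[i] a * (⇑D)^[j] b) n]
    simp only [Function.iterate_succ_apply', ih, map_sum, map_nsmul, leibniz, smul_eq_mul,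
      smul_add, sum_add_distrib]
    congr 1
    refine sum_congr rfl fun ⟨i, j⟩ hij ↦ ?_
    rw [n.choose_symm_of_eq_add (HasAntidiagonal.mem_antidiagonal.1 hij).symm]
    ring

theorem iterate_eq_zero_of_le {a : A} {m k : ℕ} (ha : (⇑D)^[m] a = 0) (hmk : m ≤ k) :
    (⇑D)^[k] a = 0 := by
  rw [← Nat.sub_add_cancel hmk, Function.iterate_add_apply, ha, iterate_map_zero]

theorem iterate_map_mul_of_iterate_succ_eq_zero {a b : A} {m n : ℕ}
    (ha : (⇑D)^[m + 1] a = 0) (hb : (⇑D)^[n + 1] b = 0) :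
    (⇑D)^[m + n] (a * b) = (m + n).choose m • ((⇑D)^[m] a * (⇑D)^[n] b) := by
  rw [iterate_map_mul_eq_sum_antidiagonal,
    sum_eq_single_of_mem (m, n) (HasAntidiagonal.mem_antidiagonal.2 rfl)]
  rintro ⟨i, j⟩ hij hne
  rw [HasAntidiagonal.mem_antidiagonal] at hij
  rcases lt_or_ge m i with hi | hi
  · rw [D.iterate_eq_zero_of_le ha hi, zero_mul, smul_zero]
  · rw [D.iterate_eq_zero_of_le hb (by grind), mul_zero, smul_zero]

theorem map_eq_zero_of_map_mul_eq_zero [IsDomain A] [CharZero A] (hD : IsLND D)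
    {a b : A} (ha : a ≠ 0) (hb : b ≠ 0) (hab : D (a * b) = 0) : D a = 0 ∧ D b = 0 := by
  obtain ⟨m, hma, hma'⟩ := Function.exists_iterate_ne_and_iterate_succ_eq ha (hD a).choose_spec
  obtain ⟨n, hnb, hnb'⟩ := Function.exists_iterate_ne_and_iterate_succ_eq hb (hD b).choose_spec
  have hmn : m + n = 0 := by
    by_contra h
    have htop := D.iterate_map_mul_of_iterate_succ_eq_zero hma' hnb'
    rw [← Nat.sub_add_cancel (Nat.pos_of_ne_zero h), Function.iterate_add_apply,
      Function.iterate_one, hab, iterate_map_zero, Nat.sub_add_cancel (Nat.pos_of_ne_zero h)]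
      at htop
    exact smul_ne_zero (Nat.choose_pos (m.le_add_right n)).ne' (mul_ne_zero hma hnb) htop.symm
  obtain ⟨rfl, rfl⟩ : m = 0 ∧ n = 0 := Nat.add_eq_zero_iff.1 hmn
  exact ⟨hma', hnb'⟩

end Derivation

/-- The kernel of a locally nilpotent derivation on a domain of characteristic zero is
factorially closed. -/
theorem stmt0 {A : Type*} [CommRing A] [IsDomain A] [Algebra ℚ A]
    (D : Derivation ℚ A A) (hD : IsLND D)
    (a b : A) (ha : a ≠ 0) (hb : b ≠ 0) (hab : D (a * b) = 0) :
    D a = 0 ∧ D b = 0 :=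
  haveI : CharZero A := charZero_of_injective_algebraMap (algebraMap ℚ A).injective
  D.map_eq_zero_of_map_mul_eq_zero hD ha hb hab
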